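/- Let E be an exterior algebra over a field and G a graph with vertices v_1,...,v_n. If v_i and v_j are vertices with N[v_i] ∩ N[v_j] = ∅ and every neighbor of v_i is adjacent to every neighbor of v_j, then the linear form e_i − e_j is regular on E/I_E(G); i.e., (I_E(G) : e_i − e_j) = I_E(G) + (e_i − e_j). -/

import Mathlib

/-! Write `ℓ = e_i - e_j` and let `π` be the algebra endomorphism of `E` killing the `e_a` with
`a ∈ N(v_i)`; it fixes `ℓ`. Contraction with `e_i^*` and contraction with `-e_j^*` are both
homotopies `h` with `h (ℓ x) + ℓ h x = x`, hence so is
`h = π ∘ (e_i^* ⌋ ·) + (1 - π) ∘ (-e_j^* ⌋ ·)`.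
This `h` maps `I` into `I`: contraction with `e_i^*` sends `I` into `I + (e_a : a ∈ N(v_i))`,
which `π` sends into `I`; contraction with `e_j^*` sends `I` into `I + (e_b : b ∈ N(v_j))`, which
`1 - π` sends into `I` because `x - π x` lies in the ideal generated by the `e_a`, `a ∈ N(v_i)`,
and `e_a e_b ∈ I`. So `ℓ g ∈ I` gives `g = h (ℓ g) + ℓ h g ∈ I + (ℓ)`. -/

namespace CliffordAlgebra

variable {R M : Type*} [CommRing R] [AddCommGroup M] [Module R M] {Q : QuadraticForm R M}

theorem contractLeft_mem_of_mem_span {J : Ideal (CliffordAlgebra Q)}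
    {s : Set (CliffordAlgebra Q)} (d : Module.Dual R M) (hsJ : s ⊆ J)
    (hs : ∀ g ∈ s, contractLeft d g ∈ J) {u : CliffordAlgebra Q} (hu : u ∈ Ideal.span s) :
    contractLeft d u ∈ J := by
  induction hu using Submodule.span_induction with
  | mem g hg => exact hs g hg
  | zero => simp
  | add x y _ _ hx hy => rw [map_add]; exact J.add_mem hx hy
  | smul a x hx ih =>
    have hxJ : x ∈ J := Ideal.span_le.2 hsJ hx
    rw [smul_eq_mul]
    induction a using CliffordAlgebra.left_induction with
    | algebraMap r => rw [contractLeft_algebraMap_mul]; exact J.mul_mem_left _ ih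
    | add a b ha hb => rw [add_mul, map_add]; exact J.add_mem ha hb
    | ι_mul a w ha =>
      rw [mul_assoc, contractLeft_ι_mul]
      exact J.sub_mem (Submodule.smul_of_tower_mem _ _ (J.mul_mem_left _ hxJ))
        (J.mul_mem_left _ ha)

noncomputable def mixedContractLeft (π : CliffordAlgebra Q →ₐ[R] CliffordAlgebra Q)
    (d d' : Module.Dual R M) : CliffordAlgebra Q →ₗ[R] CliffordAlgebra Q :=
  π.toLinearMap ∘ₗ contractLeft d + (LinearMap.id - π.toLinearMap) ∘ₗ contractLeft d'

theorem mixedContractLeft_apply (π : CliffordAlgebra Q →ₐ[R] CliffordAlgebra Q)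
    (d d' : Module.Dual R M) (x : CliffordAlgebra Q) :
    mixedContractLeft π d d' x =
      π (contractLeft d x) + (contractLeft d' x - π (contractLeft d' x)) :=
  rfl

theorem mixedContractLeft_ι_mul {π : CliffordAlgebra Q →ₐ[R] CliffordAlgebra Q}
    {d d' : Module.Dual R M} {v : M} (hπ : π (ι Q v) = ι Q v) (hd : d v = 1) (hd' : d' v = 1)
    (x : CliffordAlgebra Q) :
    mixedContractLeft π d d' (ι Q v * x) + ι Q v * mixedContractLeft π d d' x = x := by
  simp only [mixedContractLeft_apply, contractLeft_ι_mul, hd, hd', one_smul, map_sub, map_mul, hπ]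
  noncomm_ring

end CliffordAlgebra

namespace ExteriorAlgebra

open CliffordAlgebra

variable {R M : Type*} [CommRing R] [AddCommGroup M] [Module R M]

theorem ι_mul_eq_involute_mul (v : M) (x : ExteriorAlgebra R M) :
    ι R v * x = involute x * ι R v := by
  induction x using CliffordAlgebra.induction with
  | algebraMap r => rw [AlgHom.commutes, Algebra.commutes]
  | ι w => rw [involute_ι, neg_mul, eq_neg_iff_add_eq_zero, ι_add_mul_swap]
  | mul a b ha hb => rw [map_mul, ← mul_assoc, ha, mul_assoc, hb, mul_assoc]
  | add a b ha hb => rw [mul_add, ha, hb, map_add, add_mul]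

theorem ι_mul_mem_span_singleton (v : M) (x : ExteriorAlgebra R M) :
    ι R v * x ∈ Ideal.span {ι R v} := by
  rw [ι_mul_eq_involute_mul]
  exact Ideal.mul_mem_left _ _ (Ideal.subset_span rfl)

theorem ι_mul_mul_ι (v : M) (x : ExteriorAlgebra R M) : ι R v * (x * ι R v) = 0 := by
  rw [← mul_assoc, ι_mul_eq_involute_mul, mul_assoc, ι_sq_zero, mul_zero]

theorem sub_map_mem_span (f : M →ₗ[R] M) (x : ExteriorAlgebra R M) :
    x - map f x ∈ Ideal.span (Set.range fun v => ι R (v - f v)) := by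
  induction x using CliffordAlgebra.left_induction with
  | algebraMap r => rw [AlgHom.commutes, sub_self]; exact Submodule.zero_mem _
  | add x y hx hy => rw [map_add, add_sub_add_comm]; exact add_mem hx hy
  | ι_mul x v hx =>
    have hsplit : ι R v * x - map f (ι R v * x) =
        ι R v * (x - map f x) + ι R (v - f v) * map f x := by
      rw [map_mul, map_apply_ι, map_sub]
      noncomm_ring
    rw [hsplit, ι_mul_eq_involute_mul (v - f v)]
    exact add_mem (Ideal.mul_mem_left _ _ hx)
      (Ideal.mul_mem_left _ _ (Ideal.subset_span ⟨v, rfl⟩))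

theorem ι_mul_mem_iff_mem_sup_of_homotopy {I : Ideal (ExteriorAlgebra R M)} {v : M}
    (h : ExteriorAlgebra R M → ExteriorAlgebra R M)
    (hh : ∀ x, h (ι R v * x) + ι R v * h x = x)
    (hI : ∀ u ∈ I, h u ∈ I) (x : ExteriorAlgebra R M) :
    ι R v * x ∈ I ↔ x ∈ I ⊔ Ideal.span {ι R v} := by
  constructor
  · intro hx
    rw [← hh x]
    exact Submodule.add_mem_sup (hI _ hx) (ι_mul_mem_span_singleton v _)
  · intro hx
    obtain ⟨p, hp, q, hq, rfl⟩ := Submodule.mem_sup.1 hx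
    obtain ⟨y, rfl⟩ := Ideal.mem_span_singleton'.1 hq
    rw [mul_add, ι_mul_mul_ι, add_zero]
    exact I.mul_mem_left _ hp

end ExteriorAlgebra

open ExteriorAlgebra
open CliffordAlgebra (contractLeft contractLeft_ι_mul contractLeft_ι contractLeft_mem_of_mem_span
  mixedContractLeft mixedContractLeft_apply mixedContractLeft_ι_mul)

section Coordinates

variable {k V : Type*} [CommRing k] [DecidableEq V]

noncomputable def eraseCoords (A : Finset V) : (V → k) →ₗ[k] (V → k) :=
  LinearMap.id - ∑ a ∈ A, LinearMap.single k (fun _ => k) a ∘ₗ LinearMap.proj a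

theorem sub_eraseCoords (A : Finset V) (v : V → k) :
    v - eraseCoords A v = ∑ a ∈ A, Pi.single a (v a) := by
  simp [eraseCoords]

theorem eraseCoords_single (A : Finset V) (l : V) :
    eraseCoords A (Pi.single l (1 : k)) = if l ∈ A then 0 else Pi.single l 1 := by
  ext m
  by_cases hl : l ∈ A <;> by_cases hm : m = l <;> simp [eraseCoords, Pi.single_apply, hl, hm]

theorem exists_eraseCoords_single_eq_smul (A : Finset V) (l : V) :
    ∃ c : k, eraseCoords A (Pi.single l (1 : k)) = c • Pi.single l 1 := by
  by_cases hl : l ∈ A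
  · exact ⟨0, by simp [eraseCoords_single, hl]⟩
  · exact ⟨1, by simp [eraseCoords_single, hl]⟩

variable (k) in
noncomputable def varIdeal (s : Set V) : Ideal (ExteriorAlgebra k (V → k)) :=
  Ideal.span ((fun a => ι k (Pi.single a 1)) '' s)

theorem sub_map_eraseCoords_mem_varIdeal (A : Finset V) (x : ExteriorAlgebra k (V → k)) :
    x - map (eraseCoords A) x ∈ varIdeal k A := by
  refine Ideal.span_le.2 ?_ (sub_map_mem_span _ x)
  rintro _ ⟨v, rfl⟩
  dsimp only
  rw [sub_eraseCoords, map_sum]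
  refine sum_mem fun a ha => ?_
  have hsingle : Pi.single a (v a) = v a • Pi.single a (1 : k) := by
    rw [← Pi.single_smul', smul_eq_mul, mul_one]
  rw [hsingle, map_smul]
  exact Submodule.smul_of_tower_mem _ _ (Ideal.subset_span ⟨a, ha, rfl⟩)

end Coordinates

namespace SimpleGraph

variable {k V : Type*} [CommRing k] [DecidableEq V] (G : SimpleGraph V)

variable (k) in
noncomputable def exteriorEdgeIdeal : Ideal (ExteriorAlgebra k (V → k)) :=
  Ideal.span {x | ∃ a b, G.Adj a b ∧ x = ι k (Pi.single a 1) * ι k (Pi.single b 1)}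

theorem contractLeft_proj_mem_sup_varIdeal (m : V) {u : ExteriorAlgebra k (V → k)}
    (hu : u ∈ G.exteriorEdgeIdeal k) :
    contractLeft (LinearMap.proj m) u ∈
      G.exteriorEdgeIdeal k ⊔ varIdeal k (G.neighborSet m) := by
  refine contractLeft_mem_of_mem_span _ (fun g hg => Ideal.mem_sup_left (Ideal.subset_span hg))
    ?_ hu
  have hcoeff : ∀ a b, G.Adj a b →
      (Pi.single a (1 : k) : V → k) m • ι k (Pi.single b (1 : k)) ∈
        varIdeal k (G.neighborSet m) := by
    intro a b hab
    by_cases hma : m = a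
    · subst hma
      exact Submodule.smul_of_tower_mem _ _ (Ideal.subset_span ⟨b, hab, rfl⟩)
    · rw [Pi.single_eq_of_ne hma, zero_smul]
      exact Submodule.zero_mem _
  rintro _ ⟨a, b, hab, rfl⟩
  apply Ideal.mem_sup_right
  rw [contractLeft_ι_mul, contractLeft_ι, ← Algebra.commutes, ← Algebra.smul_def]
  exact Submodule.sub_mem _ (hcoeff a b hab) (hcoeff b a hab.symm)

theorem map_mem_exteriorEdgeIdeal {f : (V → k) →ₗ[k] (V → k)}
    (hf : ∀ l, ∃ c : k, f (Pi.single l 1) = c • Pi.single l 1)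
    {u : ExteriorAlgebra k (V → k)} (hu : u ∈ G.exteriorEdgeIdeal k) :
    map f u ∈ G.exteriorEdgeIdeal k := by
  induction hu using Submodule.span_induction with
  | mem g hg =>
    obtain ⟨a, b, hab, rfl⟩ := hg
    obtain ⟨c, hc⟩ := hf a
    obtain ⟨d, hd⟩ := hf b
    rw [map_mul, map_apply_ι, map_apply_ι, hc, hd, map_smul, map_smul, smul_mul_smul_comm]
    exact Submodule.smul_of_tower_mem _ _ (Ideal.subset_span ⟨a, b, hab, rfl⟩)
  | zero => simp
  | add x y _ _ hx hy => rw [map_add]; exact add_mem hx hy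
  | smul a x _ hx => rw [smul_eq_mul, map_mul]; exact Ideal.mul_mem_left _ _ hx

theorem mul_ι_single_mem_exteriorEdgeIdeal {s : Set V} {b : V} (hs : ∀ a ∈ s, G.Adj a b)
    {y : ExteriorAlgebra k (V → k)} (hy : y ∈ varIdeal k s) :
    y * ι k (Pi.single b 1) ∈ G.exteriorEdgeIdeal k := by
  induction hy using Submodule.span_induction with
  | mem _ hg =>
    obtain ⟨a, ha, rfl⟩ := hg
    exact Ideal.subset_span ⟨a, b, hs a ha, rfl⟩
  | zero => simp
  | add x y _ _ hx hy => rw [add_mul]; exact add_mem hx hy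
  | smul a x _ hx => rw [smul_eq_mul, mul_assoc]; exact Ideal.mul_mem_left _ _ hx

theorem map_eraseCoords_mem_exteriorEdgeIdeal {A : Finset V} {s : Set V} (hs : s ⊆ A)
    {u : ExteriorAlgebra k (V → k)} (hu : u ∈ G.exteriorEdgeIdeal k ⊔ varIdeal k s) :
    map (eraseCoords A) u ∈ G.exteriorEdgeIdeal k := by
  obtain ⟨p, hp, q, hq, rfl⟩ := Submodule.mem_sup.1 hu
  have hker : varIdeal k s ≤
      RingHom.ker (map (eraseCoords A : (V → k) →ₗ[k] (V → k))) := by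
    refine Ideal.span_le.2 ?_
    rintro _ ⟨a, ha, rfl⟩
    simp [eraseCoords_single, Finset.mem_coe.1 (hs ha)]
  rw [map_add, RingHom.mem_ker.1 (hker hq), add_zero]
  exact G.map_mem_exteriorEdgeIdeal (exists_eraseCoords_single_eq_smul A) hp

theorem sub_map_eraseCoords_mem_exteriorEdgeIdeal {A : Finset V} {s : Set V}
    (hA : ∀ a ∈ A, ∀ b ∈ s, G.Adj a b) {u : ExteriorAlgebra k (V → k)}
    (hu : u ∈ G.exteriorEdgeIdeal k ⊔ varIdeal k s) :
    u - map (eraseCoords A) u ∈ G.exteriorEdgeIdeal k := by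
  set π := map (eraseCoords A : (V → k) →ₗ[k] (V → k))
  have hfix : ∀ b ∈ s, π (ι k (Pi.single b 1)) = ι k (Pi.single b 1) := by
    intro b hb
    have hbA : b ∉ A := fun h => G.irrefl (hA b h b hb)
    simp [π, eraseCoords_single, hbA]
  obtain ⟨p, hp, q, hq, rfl⟩ := Submodule.mem_sup.1 hu
  clear hu
  rw [map_add, add_sub_add_comm]
  have hπp := G.map_mem_exteriorEdgeIdeal (exists_eraseCoords_single_eq_smul A) hp
  refine add_mem (sub_mem hp hπp) ?_
  suffices ∀ z, z * q - π (z * q) ∈ G.exteriorEdgeIdeal k by simpa only [one_mul] using this 1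
  induction hq using Submodule.span_induction with
  | mem _ hg =>
    obtain ⟨b, hb, rfl⟩ := hg
    intro z
    rw [map_mul, hfix b hb, ← sub_mul]
    exact G.mul_ι_single_mem_exteriorEdgeIdeal (fun a ha => hA a ha b hb)
      (sub_map_eraseCoords_mem_varIdeal A z)
  | zero => simp
  | add x y _ _ hx hy =>
    intro z
    rw [mul_add, map_add, add_sub_add_comm]
    exact add_mem (hx z) (hy z)
  | smul a x _ hx =>
    intro z
    rw [smul_eq_mul, ← mul_assoc]
    exact hx (z * a)

theorem mixedContractLeft_mem_exteriorEdgeIdeal [G.LocallyFinite] {i j : V}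
    (hadj : ∀ a b, G.Adj i a → G.Adj j b → G.Adj a b) {u : ExteriorAlgebra k (V → k)}
    (hu : u ∈ G.exteriorEdgeIdeal k) :
    mixedContractLeft (map (eraseCoords (G.neighborFinset i))) (LinearMap.proj i)
      (-LinearMap.proj j) u ∈ G.exteriorEdgeIdeal k := by
  rw [mixedContractLeft_apply]
  refine add_mem (G.map_eraseCoords_mem_exteriorEdgeIdeal (fun a ha => by simpa using ha)
    (G.contractLeft_proj_mem_sup_varIdeal i hu))
    (G.sub_map_eraseCoords_mem_exteriorEdgeIdeal (s := G.neighborSet j) ?_ ?_)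
  · exact fun a ha b hb => hadj a b (by simpa using ha) hb
  · rw [map_neg, LinearMap.neg_apply]
    exact neg_mem (G.contractLeft_proj_mem_sup_varIdeal j hu)

end SimpleGraph

/-- Let `E` be the exterior algebra on generators `e 1, ..., e n` over a field and `G` a
graph on `n` vertices with exterior edge ideal `I`.  If `N[v_i] ∩ N[v_j] = ∅` and every
neighbor of `v_i` is adjacent to every neighbor of `v_j`, then `e_i - e_j` is regular on
`E/I`, i.e. `(I : e_i - e_j) = I + (e_i - e_j)`. -/
theorem difference_is_regular {k : Type*} [Field k] {n : ℕ}
    (G : SimpleGraph (Fin n)) (i j : Fin n)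
    (hdisj : (G.neighborSet i ∪ {i}) ∩ (G.neighborSet j ∪ {j}) = ∅)
    (hadj : ∀ a b : Fin n, G.Adj i a → G.Adj j b → G.Adj a b)
    (e : Fin n → ExteriorAlgebra k (Fin n → k))
    (he : ∀ l, e l = ExteriorAlgebra.ι k (Pi.single l (1 : k)))
    (I : Ideal (ExteriorAlgebra k (Fin n → k)))
    (hI : I = Ideal.span {x | ∃ a b : Fin n, G.Adj a b ∧ x = e a * e b}) :
    ∀ g : ExteriorAlgebra k (Fin n → k),
      (e i - e j) * g ∈ I ↔ g ∈ I ⊔ Ideal.span {e i - e j} := by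
  classical
  obtain rfl : e = fun l => ι k (Pi.single l 1) := funext he
  subst hI
  have hclosed : ∀ l, G.Adj i l ∨ l = i → G.Adj j l ∨ l = j → False := fun l hi hj =>
    Set.eq_empty_iff_forall_notMem.1 hdisj l ⟨hi, hj⟩
  have hij : i ≠ j := fun h => hclosed j (Or.inr h.symm) (Or.inr rfl)
  have hnadj : ¬ G.Adj i j := fun h => hclosed j (Or.inl h) (Or.inr rfl)
  have hℓ : ι k (Pi.single i (1 : k)) - ι k (Pi.single j (1 : k)) =
      ι k (Pi.single i 1 - Pi.single j 1 : Fin n → k) :=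
    (map_sub _ _ _).symm
  simp only [hℓ]
  refine ι_mul_mem_iff_mem_sup_of_homotopy _ (mixedContractLeft_ι_mul ?_ ?_ ?_)
    (fun u hu => G.mixedContractLeft_mem_exteriorEdgeIdeal hadj hu)
  · simp [eraseCoords_single, hnadj]
  · simp [hij.symm]
  · simp [hij]
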